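/- arXiv:math/0609137 — 4 statements merged into one kernel-verified Lean document; each statement's English description precedes it below -/
import Mathlib

section
/- If a polynomial g(x1,x2,d) over ℂ satisfies g(x1,x2,d0) = c(d0) * g(x1,x2,-d0) for infinitely many values d0 ∈ ℂ (with c(d0) a nonzero constant for each such d0) and g is monic in some fixed monomial ordering in (x1,x2) with leading coefficient 1, then g belongs to ℂ[x1,x2][d^2], i.e., g contains only even powers of d. In particular its degree in d is even. -/
open Polynomial

lemma coeff_comp_neg_X' {R : Type*} [CommRing R] (p : R[X]) (n : ℕ) :
    (p.comp (-X)).coeff n = (-1 : R) ^ n * p.coeff n := by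
  induction p using Polynomial.induction_on' with
  | add p q hp hq => simp [add_comp, hp, hq, mul_add]
  | monomial k a =>
    have hc : ((-1 : R[X])) ^ k = C ((-1 : R) ^ k) := by
      rw [map_pow, map_neg, map_one]
    rw [monomial_comp, neg_pow, hc, ← mul_assoc, ← C_mul]
    simp only [coeff_C_mul, coeff_X_pow, coeff_monomial, mul_ite, mul_zero]
    by_cases h : n = k
    · subst h; simp [mul_comm]
    · simp [h, Ne.symm h]

/-- if `g ∈ ℂ[x1,x2][d]` (normalized so that the comparison constant is `1`)
satisfies `g(x1,x2,d0) = g(x1,x2,-d0)` for infinitely many `d0 ∈ ℂ`, then `g` contains only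
even powers of `d`; in particular its degree in `d` is even. -/
theorem even_powers_of_d_of_infinitely_many_symmetric_specializations
    (g : Polynomial (MvPolynomial (Fin 2) ℂ))
    (hinf : {d0 : ℂ |
        Polynomial.eval (MvPolynomial.C d0) g
          = Polynomial.eval (MvPolynomial.C (-d0)) g}.Infinite) :
    (∀ n : ℕ, Odd n → g.coeff n = 0) ∧ Even g.natDegree := by
  set h := g - g.comp (-X) with hh
  have hC : Function.Injective (MvPolynomial.C : ℂ → MvPolynomial (Fin 2) ℂ) :=
    MvPolynomial.C_injective _ _
  have hsub : (MvPolynomial.C '' {d0 : ℂ |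
        Polynomial.eval (MvPolynomial.C d0) g
          = Polynomial.eval (MvPolynomial.C (-d0)) g}) ⊆ {x | h.IsRoot x} := by
    rintro _ ⟨d0, hd0, rfl⟩
    simp only [Set.mem_setOf_eq, IsRoot, hh, eval_sub, eval_comp, eval_neg, eval_X, sub_eq_zero]
    rw [hd0, map_neg]
  have h0 : h = 0 :=
    eq_zero_of_infinite_isRoot h ((hinf.image (hC.injOn)).mono hsub)
  have hg : g = g.comp (-X) := sub_eq_zero.mp h0
  have key : ∀ n : ℕ, Odd n → g.coeff n = 0 := by
    intro n hn
    have := congrArg (fun p => p.coeff n) hg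
    simp only [coeff_comp_neg_X', hn.neg_one_pow, neg_one_mul] at this
    have h2 : (2 : MvPolynomial (Fin 2) ℂ) * g.coeff n = 0 := by linear_combination this
    exact (mul_eq_zero.mp h2).resolve_left two_ne_zero
  refine ⟨key, ?_⟩
  by_cases hg0 : g = 0
  · simp [hg0]
  · rcases Nat.even_or_odd g.natDegree with he | ho
    · exact he
    · exact absurd (key _ ho) (leadingCoeff_ne_zero.mpr hg0)
end

section
/- Let f ∈ ℂ[y1,y2] with partial derivatives f1, f2, and let p = (b1,b2) satisfy f(p)=0, f2(p) ≠ 0, and (f1(p)^2+f2(p)^2)(b2-k0)^2 = f2(p)^2 d0^2 with d0 ≠ 0. Define q = (a1,a2) with a1 = (-f1(p)b2 + f2(p)b1 + f1(p)k0)/f2(p), a2 = k0, and u0 = 1/(f1(p)^2+f2(p)^2). Then (p,q,u0) satisfies: (a1-b1)^2+(a2-b2)^2 = d0^2, -f2(p)(a1-b1)+f1(p)(a2-b2) = 0, u0·(f1(p)^2+f2(p)^2) = 1, and a2 = k0. -/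
/-!
The point `q` is where the normal line at `p` meets the line `a2 = k0`, so
`a1 - b1 = f1(p) (k0 - b2) / f2(p)`. With this, the circle equation is the hypothesis on `p`
divided by `f2(p)²`, and that same hypothesis together with `d0 ≠ 0` rules out
`f1(p)² + f2(p)² = 0`.
-/

open MvPolynomial

section OffsetLift

variable {K : Type*} [Field K] {v1 v2 : K}

lemma normal_foot_sub (hv2 : v2 ≠ 0) (b1 b2 k : K) :
    (-v1 * b2 + v2 * b1 + v1 * k) / v2 - b1 = v1 * (k - b2) / v2 := by
  field_simp
  ring

lemma normal_foot_mem_normal (hv2 : v2 ≠ 0) (b1 b2 k : K) :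
    -v2 * ((-v1 * b2 + v2 * b1 + v1 * k) / v2 - b1) + v1 * (k - b2) = 0 := by
  rw [normal_foot_sub hv2]
  field_simp
  ring

lemma normal_foot_mem_circle (hv2 : v2 ≠ 0) {b1 b2 d k : K}
    (hs : (v1 ^ 2 + v2 ^ 2) * (b2 - k) ^ 2 = v2 ^ 2 * d ^ 2) :
    ((-v1 * b2 + v2 * b1 + v1 * k) / v2 - b1) ^ 2 + (k - b2) ^ 2 = d ^ 2 := by
  rw [normal_foot_sub hv2]
  field_simp
  linear_combination hs

lemma sq_add_sq_ne_zero_of_mul_eq {b2 d k : K} (hv2 : v2 ≠ 0) (hd : d ≠ 0)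
    (hs : (v1 ^ 2 + v2 ^ 2) * (b2 - k) ^ 2 = v2 ^ 2 * d ^ 2) :
    v1 ^ 2 + v2 ^ 2 ≠ 0 := by
  intro h
  rw [h, zero_mul] at hs
  exact mul_ne_zero (pow_ne_zero 2 hv2) (pow_ne_zero 2 hd) hs.symm

end OffsetLift

theorem lift_to_offset_system_general
    (f : MvPolynomial (Fin 2) ℂ) (b1 b2 d0 k0 : ℂ)
    (h2 : eval ![b1, b2] (pderiv 1 f) ≠ 0)
    (hd : d0 ≠ 0)
    (hs : (eval ![b1, b2] (pderiv 0 f) ^ 2 + eval ![b1, b2] (pderiv 1 f) ^ 2)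
            * (b2 - k0) ^ 2
          = eval ![b1, b2] (pderiv 1 f) ^ 2 * d0 ^ 2) :
    let v1 := eval ![b1, b2] (pderiv 0 f)
    let v2 := eval ![b1, b2] (pderiv 1 f)
    let a1 := (-v1 * b2 + v2 * b1 + v1 * k0) / v2
    let a2 := k0
    let u0 := 1 / (v1 ^ 2 + v2 ^ 2)
    (a1 - b1) ^ 2 + (a2 - b2) ^ 2 = d0 ^ 2
      ∧ -v2 * (a1 - b1) + v1 * (a2 - b2) = 0
      ∧ u0 * (v1 ^ 2 + v2 ^ 2) = 1
      ∧ a2 = k0 :=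
  ⟨normal_foot_mem_circle h2 hs, normal_foot_mem_normal h2 b1 b2 k0,
    one_div_mul_cancel (sq_add_sq_ne_zero_of_mul_eq h2 hd hs), rfl⟩

/-- a non-ramification point `p = (b1,b2)` of the curve lying on the auxiliary
curve `S(d0,k0)` lifts to a solution `(p,q,u0)` of the offset-defining system: with
`a1 = (-f1(p)b2 + f2(p)b1 + f1(p)k0)/f2(p)`, `a2 = k0`, `u0 = 1/(f1(p)²+f2(p)²)`, the
circle, normal-line, non-isotropy and line equations all hold. -/
theorem lift_to_offset_system
    (f : MvPolynomial (Fin 2) ℂ) (b1 b2 d0 k0 : ℂ)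
    (hp : eval ![b1, b2] f = 0)
    (h2 : eval ![b1, b2] (pderiv 1 f) ≠ 0)
    (hd : d0 ≠ 0)
    (hs : (eval ![b1, b2] (pderiv 0 f) ^ 2 + eval ![b1, b2] (pderiv 1 f) ^ 2)
            * (b2 - k0) ^ 2
          = eval ![b1, b2] (pderiv 1 f) ^ 2 * d0 ^ 2) :
    let v1 := eval ![b1, b2] (pderiv 0 f)
    let v2 := eval ![b1, b2] (pderiv 1 f)
    let a1 := (-v1 * b2 + v2 * b1 + v1 * k0) / v2
    let a2 := k0
    let u0 := 1 / (v1 ^ 2 + v2 ^ 2)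
    (a1 - b1) ^ 2 + (a2 - b2) ^ 2 = d0 ^ 2
      ∧ -v2 * (a1 - b1) + v1 * (a2 - b2) = 0
      ∧ u0 * (v1 ^ 2 + v2 ^ 2) = 1
      ∧ a2 = k0 :=
  lift_to_offset_system_general f b1 b2 d0 k0 h2 hd hs
end

section
/- Let F ∈ ℂ[y1,y2,y3] be homogeneous with partial derivatives F1, F2, and let N(y1,y2,y3,x1,x2) = -F2·(x1·y3 - y1) + F1·(x2·y3 - y2). A point p = (a:b:c) with F(p) = 0 satisfies N(p,x1,x2) = 0 identically in (x1,x2) if and only if either (c ≠ 0 and F1(p) = F2(p) = 0) or (c = 0 and F1(p)^2 + F2(p)^2 = 0). -/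
/-!
By Euler's identity `∑ yᵢ Fᵢ = deg F · F`, the gradient `(A, B, D)` of `F` at a point `p = (a:b:c)`
of the curve satisfies `aA + bB + cD = 0`. The polynomial `N(p, x₁, x₂)` is affine in `(x₁, x₂)`,
so it vanishes identically iff `Ac = Bc = 0` and `aB = bA`. For `c ≠ 0` this says `A = B = 0`.
For `c = 0` we have `(a, b) ≠ 0` and `aA + bB = 0`, so `(A, B)` is parallel to `(a, b)` exactly when
it is isotropic, `A² + B² = 0`.
-/

open MvPolynomial

theorem MvPolynomial.IsHomogeneous.sum_mul_eval_pderiv_eq_zero {σ R : Type*} [CommSemiring R]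
    [Fintype σ] {F : MvPolynomial σ R} {n : ℕ} (hF : F.IsHomogeneous n) {p : σ → R}
    (hp : eval p F = 0) : ∑ i, p i * eval p (pderiv i F) = 0 := by
  simpa [hp] using congrArg (eval p) hF.sum_X_mul_pderiv

section Algebra

variable {R : Type*} [CommRing R]

theorem forall_normal_line_eq_zero_iff (a b c A B : R) :
    (∀ x₁ x₂ : R, -B * (x₁ * c - a) + A * (x₂ * c - b) = 0) ↔
      a * B = b * A ∧ A * c = 0 ∧ B * c = 0 := by
  constructor
  · intro h
    have h₀₀ := h 0 0
    have h₁₀ := h 1 0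
    have h₀₁ := h 0 1
    exact ⟨by linear_combination h₀₀, by linear_combination h₀₁ - h₀₀,
      by linear_combination h₀₀ - h₁₀⟩
  · rintro ⟨hab, hA, hB⟩ x₁ x₂
    linear_combination x₂ * hA - x₁ * hB + hab

variable [IsDomain R]

theorem mul_eq_mul_iff_sq_add_sq_eq_zero {a b A B : R} (hab : a ≠ 0 ∨ b ≠ 0)
    (horth : a * A + b * B = 0) : a * B = b * A ↔ A ^ 2 + B ^ 2 = 0 := by
  constructor
  · intro hpar
    rcases hab with ha | hb
    · exact (mul_eq_zero.mp (by linear_combination A * horth + B * hpar :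
        a * (A ^ 2 + B ^ 2) = 0)).resolve_left ha
    · exact (mul_eq_zero.mp (by linear_combination B * horth - A * hpar :
        b * (A ^ 2 + B ^ 2) = 0)).resolve_left hb
  · intro hiso
    by_cases hA : A = 0
    · have hB : B = 0 := pow_eq_zero_iff two_ne_zero |>.mp (by linear_combination hiso - A * hA)
      simp [hA, hB]
    · have : (a * B - b * A) * A = 0 := by linear_combination B * horth - b * hiso
      exact sub_eq_zero.mp ((mul_eq_zero.mp this).resolve_right hA)

end Algebra

/-- for the homogenized normal-line polynomial
`N(y,x) = -F2·(x1·y3 - y1) + F1·(x2·y3 - y2)`, a point `p = (a:b:c)` of the projective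
curve `F = 0` satisfies `N(p,x1,x2) = 0` identically in `(x1,x2)` iff either `c ≠ 0` and
`F1(p) = F2(p) = 0`, or `c = 0` and `F1(p)² + F2(p)² = 0`. -/
theorem normal_line_vanishes_iff
    (F : MvPolynomial (Fin 3) ℂ) (n : ℕ) (hF : F.IsHomogeneous n)
    (a b c : ℂ) (hne : ![a, b, c] ≠ 0)
    (hp : eval ![a, b, c] F = 0) :
    (∀ x1 x2 : ℂ,
        -(eval ![a, b, c] (pderiv 1 F)) * (x1 * c - a)
          + eval ![a, b, c] (pderiv 0 F) * (x2 * c - b) = 0)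
      ↔ ((c ≠ 0 ∧ eval ![a, b, c] (pderiv 0 F) = 0 ∧ eval ![a, b, c] (pderiv 1 F) = 0)
          ∨ (c = 0 ∧ eval ![a, b, c] (pderiv 0 F) ^ 2
                + eval ![a, b, c] (pderiv 1 F) ^ 2 = 0)) := by
  have heuler := hF.sum_mul_eval_pderiv_eq_zero hp
  simp only [Fin.sum_univ_three, Matrix.cons_val] at heuler
  rw [forall_normal_line_eq_zero_iff]
  set A := eval ![a, b, c] (pderiv 0 F)
  set B := eval ![a, b, c] (pderiv 1 F)
  rcases eq_or_ne c 0 with rfl | hc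
  · have hab : a ≠ 0 ∨ b ≠ 0 := by
      by_contra! h
      exact hne (by simp [h.1, h.2])
    rw [← mul_eq_mul_iff_sq_add_sq_eq_zero hab (by linear_combination heuler)]
    simp
  · simp only [mul_eq_zero, hc, or_false, ne_eq, not_false_eq_true, true_and, false_and,
      and_iff_right_iff_imp, and_imp]
    rintro hA hB
    simp [hA, hB]
end

section
/- Let F ∈ ℂ[y1,y2,y3] be homogeneous and irreducible with deg F ≥ 2, and let N = -F2·(x1·y3 - y1) + F1·(x2·y3 - y2) ∈ ℂ[y1,y2,y3][x1,x2], where F1, F2 are partial derivatives of F. For any fixed (τ1,τ2) ∈ ℂ^2, F does not divide N(y1,y2,y3,τ1,τ2) unless N(·,τ1,τ2) is the zero polynomial. -/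
open MvPolynomial Complex

/-! ### Auxiliary lemmas -/

private theorem coeff_X_mul_pderiv (i : Fin 3) (p : MvPolynomial (Fin 3) ℂ) (e : Fin 3 →₀ ℕ) :
    coeff e (X i * pderiv i p) = (e i) * coeff e p := by
  induction p using MvPolynomial.induction_on' with
  | add p q hp hq => simp [mul_add, hp, hq, mul_add]
  | monomial u a =>
    rw [pderiv_monomial]
    rcases Nat.eq_zero_or_pos (u i) with h | h
    · simp only [h, Nat.cast_zero, mul_zero, map_zero, mul_zero, coeff_zero, coeff_monomial]
      split
      · next heq => subst heq; simp [h]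
      · ring
    · rw [X, monomial_mul, one_mul]
      have : Finsupp.single i 1 + (u - Finsupp.single i 1) = u := by
        ext j
        rcases eq_or_ne j i with rfl | hj
        · simp; omega
        · simp [Finsupp.single_apply, hj.symm, Ne.symm hj]
      rw [this, coeff_monomial, coeff_monomial]
      split
      · next heq => subst heq; ring
      · ring

private theorem coeff_pderiv' (i : Fin 3) (p : MvPolynomial (Fin 3) ℂ) (d : Fin 3 →₀ ℕ) :
    coeff d (pderiv i p) = ((d i : ℂ) + 1) * coeff (d + Finsupp.single i 1) p := by
  induction p using MvPolynomial.induction_on' with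
  | add p q hp hq => simp [hp, hq, mul_add]
  | monomial u a =>
    rw [pderiv_monomial, coeff_monomial, coeff_monomial]
    rcases Nat.eq_zero_or_pos (u i) with h | h
    · have : ¬ u = d + Finsupp.single i 1 := by
        intro he; apply_fun (fun f => f i) at he; simp [h] at he
      simp only [this, if_false, mul_zero, h]
      split
      · simp
      · simp
    · have hud : u - Finsupp.single i 1 = d ↔ u = d + Finsupp.single i 1 := by
        constructor
        · rintro rfl; ext j; rcases eq_or_ne j i with rfl | hj
          · simp; omega
          · simp [Finsupp.single_apply, Ne.symm hj]
        · rintro rfl; ext j; rcases eq_or_ne j i with rfl | hj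
          · simp
          · simp [Finsupp.single_apply, Ne.symm hj]
      by_cases he : u = d + Finsupp.single i 1
      · rw [if_pos (hud.2 he), if_pos he]
        have : u i = d i + 1 := by subst he; simp
        rw [this]; push_cast; ring
      · rw [if_neg (fun hh => he (hud.1 hh)), if_neg he, mul_zero]

private theorem pderiv_isHomogeneous {p : MvPolynomial (Fin 3) ℂ} {n : ℕ} (i : Fin 3)
    (hp : p.IsHomogeneous n) : (pderiv i p).IsHomogeneous (n - 1) := by
  intro d hd
  rw [coeff_pderiv'] at hd
  have h2 : coeff (d + Finsupp.single i 1) p ≠ 0 := by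
    intro h; rw [h, mul_zero] at hd; exact hd rfl
  have h3 := hp h2
  rw [map_add] at h3
  have h4 : Finsupp.weight 1 (Finsupp.single i 1) = 1 := by
    simp [Finsupp.weight_apply, Finsupp.sum_single_index]
  rw [h4] at h3
  omega

private theorem coeff_rescale (t : ℂ) (p : MvPolynomial (Fin 3) ℂ) (d : Fin 3 →₀ ℕ) :
    coeff d (aeval (fun i => C t * X i) p) = t ^ (Finsupp.weight (1 : Fin 3 → ℕ) d) * coeff d p := by
  induction p using MvPolynomial.induction_on' with
  | add p q hp hq => simp only [map_add, coeff_add, hp, hq]; ring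
  | monomial u a =>
    rw [aeval_monomial]
    have h1 : (u.prod fun i k => (C t * X i) ^ k)
        = C (t ^ (Finsupp.weight (1 : Fin 3 → ℕ) u)) * u.prod fun i k => (X i : MvPolynomial (Fin 3) ℂ) ^ k := by
      have : ∀ i k, (C t * X i : MvPolynomial (Fin 3) ℂ) ^ k = C (t ^ k) * X i ^ k := by
        intro i k; rw [mul_pow, ← C_pow]
      rw [Finsupp.prod_congr (g2 := fun i k => C (t ^ k) * X i ^ k) (fun i _ => this i (u i)), Finsupp.prod_mul]
      congr 1
      rw [← map_finsuppProd, Finsupp.weight_apply]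
      congr 1
      rw [Finsupp.prod, Finsupp.sum, Finset.prod_pow_eq_pow_sum]
      congr 1
      apply Finset.sum_congr rfl
      intro i _; simp
    rw [h1, algebraMap_eq, mul_left_comm, ← monomial_eq, coeff_C_mul, coeff_monomial]
    rcases eq_or_ne u d with rfl | h
    · simp [coeff_monomial]
    · simp [coeff_monomial, h]

private theorem rescale_isHomogeneous {p : MvPolynomial (Fin 3) ℂ} {a : ℕ} (hp : p.IsHomogeneous a) (t : ℂ) :
    aeval (fun i => C t * X i) p = C (t ^ a) * p := by
  ext d
  rw [coeff_rescale, coeff_C_mul]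
  by_cases h : coeff d p = 0
  · simp [h]
  · rw [hp h]

private theorem isHomogeneous_of_factor {A B q : MvPolynomial (Fin 3) ℂ} {a b : ℕ}
    (hA : A.IsHomogeneous a) (hB : B.IsHomogeneous b) (hB0 : B ≠ 0) (h : A = B * q) :
    q.IsHomogeneous (a - b) := by
  have h2 := rescale_isHomogeneous hA (2 : ℂ)
  rw [h, map_mul, rescale_isHomogeneous hB] at h2
  have h3 : B * (C ((2:ℂ) ^ b) * aeval (fun i => C (2:ℂ) * X i) q - C ((2:ℂ) ^ a) * q) = 0 := by
    linear_combination h2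
  rcases mul_eq_zero.1 h3 with h4 | h4
  · exact absurd h4 hB0
  rw [sub_eq_zero] at h4
  intro d hd
  have h5 := congrArg (coeff d) h4
  rw [coeff_C_mul, coeff_C_mul, coeff_rescale] at h5
  have h6 : (2:ℂ) ^ (b + Finsupp.weight (1 : Fin 3 → ℕ) d) = 2 ^ a := by
    refine mul_right_cancel₀ hd ?_
    rw [pow_add]; linear_combination h5
  have h7 : b + Finsupp.weight (1 : Fin 3 → ℕ) d = a := by
    have : ((2 ^ (b + Finsupp.weight (1 : Fin 3 → ℕ) d) : ℕ) : ℂ) = ((2 ^ a : ℕ) : ℂ) := by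
      push_cast; exact h6
    exact Nat.pow_right_injective (le_refl 2) (Nat.cast_inj.1 this)
  omega

private theorem eq_C_of_isHomogeneous_zero {p : MvPolynomial (Fin 3) ℂ} (hp : p.IsHomogeneous 0) :
    p = C (coeff 0 p) := by
  ext d
  rw [coeff_C]
  by_cases h : coeff d p = 0
  · rcases eq_or_ne (0 : Fin 3 →₀ ℕ) d with rfl | hd
    · simp [h]
    · simp [hd, h]
  · have h1 := hp h
    rw [show (1 : Fin 3 → ℕ) = fun _ => 1 from rfl, ← Finsupp.degree_eq_weight_one, Finsupp.degree_eq_zero_iff] at h1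
    subst h1
    simp

/-! ### The coordinate change -/

noncomputable def zP (τ1 τ2 : ℂ) : MvPolynomial (Fin 3) ℂ :=
  (X 0 - C τ1 * X 2) + C I * (X 1 - C τ2 * X 2)
noncomputable def zbP (τ1 τ2 : ℂ) : MvPolynomial (Fin 3) ℂ :=
  (X 0 - C τ1 * X 2) - C I * (X 1 - C τ2 * X 2)
noncomputable def ψv (τ1 τ2 : ℂ) : Fin 3 → MvPolynomial (Fin 3) ℂ :=
  ![zP τ1 τ2, zbP τ1 τ2, X 2]
noncomputable def φv (τ1 τ2 : ℂ) : Fin 3 → MvPolynomial (Fin 3) ℂ :=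
  ![C (2⁻¹ : ℂ) * (X 0 + X 1) + C τ1 * X 2,
    C (-(I/2)) * (X 0 - X 1) + C τ2 * X 2, X 2]

private theorem hA : (C I : MvPolynomial (Fin 3) ℂ) * C (I/2) = -C (2⁻¹ : ℂ) := by
  rw [← C_mul, ← map_neg]; congr 1
  linear_combination (2⁻¹ : ℂ) * I_mul_I

private theorem hB : (C (2⁻¹ : ℂ) : MvPolynomial (Fin 3) ℂ) + C (2⁻¹ : ℂ) = 1 := by
  rw [← C_add]; norm_num

private theorem hneg : (C (-(I/2)) : MvPolynomial (Fin 3) ℂ) = -C (I/2) := map_neg C _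

private theorem hC : (C I : MvPolynomial (Fin 3) ℂ) * C I = -1 := by
  rw [← C_mul, I_mul_I, map_neg, map_one]

theorem phi_psi (τ1 τ2 : ℂ) (p : MvPolynomial (Fin 3) ℂ) :
    aeval (φv τ1 τ2) (aeval (ψv τ1 τ2) p) = p := by
  have h : ((aeval (φv τ1 τ2)).comp (aeval (ψv τ1 τ2)) :
      MvPolynomial (Fin 3) ℂ →ₐ[ℂ] MvPolynomial (Fin 3) ℂ) = AlgHom.id ℂ _ := by
    apply MvPolynomial.algHom_ext
    intro i
    fin_cases i
    · simp [ψv, φv, zP, zbP, hneg]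
      linear_combination (X 1 - X 0 : MvPolynomial (Fin 3) ℂ) * hA + (X 0 : MvPolynomial (Fin 3) ℂ) * hB
    · simp [ψv, φv, zP, zbP, hneg]
      linear_combination (X 0 - X 1 : MvPolynomial (Fin 3) ℂ) * hA + (X 1 : MvPolynomial (Fin 3) ℂ) * hB
    · simp [ψv, φv]
  exact congrFun (congrArg (fun (f : _ →ₐ[ℂ] _) => f.toFun) h) p

theorem psi_phi (τ1 τ2 : ℂ) (p : MvPolynomial (Fin 3) ℂ) :
    aeval (ψv τ1 τ2) (aeval (φv τ1 τ2) p) = p := by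
  have h : ((aeval (ψv τ1 τ2)).comp (aeval (φv τ1 τ2)) :
      MvPolynomial (Fin 3) ℂ →ₐ[ℂ] MvPolynomial (Fin 3) ℂ) = AlgHom.id ℂ _ := by
    apply MvPolynomial.algHom_ext
    intro i
    fin_cases i
    · simp [ψv, φv, zP, zbP, hneg]
      linear_combination (X 0 - C τ1 * X 2 : MvPolynomial (Fin 3) ℂ) * hB
    · simp [ψv, φv, zP, zbP, hneg]
      linear_combination (2*(C τ2 * X 2 - X 1) : MvPolynomial (Fin 3) ℂ) * hA + (X 1 - C τ2 * X 2 : MvPolynomial (Fin 3) ℂ) * hB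
    · simp [ψv, φv]
  exact congrFun (congrArg (fun (f : _ →ₐ[ℂ] _) => f.toFun) h) p

theorem chain_rule (τ1 τ2 : ℂ) (p : MvPolynomial (Fin 3) ℂ) :
    (C τ2 * X 2 - X 1) * pderiv 0 (aeval (ψv τ1 τ2) p)
      + (X 0 - C τ1 * X 2) * pderiv 1 (aeval (ψv τ1 τ2) p)
    = aeval (ψv τ1 τ2) (C I * (X 0 * pderiv 0 p - X 1 * pderiv 1 p)) := by
  have hz0 : pderiv 0 (zP τ1 τ2) = 1 := by simp [zP]
  have hz1 : pderiv 1 (zP τ1 τ2) = C I := by simp [zP]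
  have hzb0 : pderiv 0 (zbP τ1 τ2) = 1 := by simp [zbP]
  have hzb1 : pderiv 1 (zbP τ1 τ2) = -C I := by simp [zbP]
  have hzid : (C τ2 * X 2 - X 1) + C I * (X 0 - C τ1 * X 2) = C I * zP τ1 τ2 := by
    rw [zP]; linear_combination (C τ2 * X 2 - X 1 : MvPolynomial (Fin 3) ℂ) * hC
  have hzbid : (C τ2 * X 2 - X 1) - C I * (X 0 - C τ1 * X 2) = -C I * zbP τ1 τ2 := by
    rw [zbP]; linear_combination (C τ2 * X 2 - X 1 : MvPolynomial (Fin 3) ℂ) * hC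
  induction p using MvPolynomial.induction_on with
  | C a => simp
  | add p q hp hq =>
    simp only [map_add, mul_add, add_add_add_comm, hp, hq]
    rw [← map_add]
    congr 1
    ring
  | mul_X p n ih =>
    simp only [ψv] at ih ⊢
    fin_cases n <;>
      simp only [Fin.isValue, Fin.zero_eta, Fin.mk_one, Fin.reduceFinMk, map_mul, map_add, map_sub, aeval_X,
        aeval_C, pderiv_mul, hz0, hz1, hzb0, hzb1,
        Matrix.cons_val_zero, Matrix.cons_val_one, Matrix.head_cons, Matrix.cons_val_two,
        Matrix.tail_cons, pderiv_X_self,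
        pderiv_X_of_ne (show (0 : Fin 3) ≠ 1 by decide),
        pderiv_X_of_ne (show (1 : Fin 3) ≠ 0 by decide),
        pderiv_X_of_ne (show (2 : Fin 3) ≠ 0 by decide),
        pderiv_X_of_ne (show (2 : Fin 3) ≠ 1 by decide),
        mul_one, mul_zero, add_zero, zero_add, algebraMap_eq] at ih ⊢
    · linear_combination (zP τ1 τ2) * ih + (aeval ![zP τ1 τ2, zbP τ1 τ2, X 2] p) * hzid
    · linear_combination (zbP τ1 τ2) * ih + (aeval ![zP τ1 τ2, zbP τ1 τ2, X 2] p) * hzbid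
    · linear_combination (X 2 : MvPolynomial (Fin 3) ℂ) * ih

/-! ### Conclusion helpers -/

private theorem not_unit_pair {F : MvPolynomial (Fin 3) ℂ} {m : ℕ}
    (hirr : Irreducible F) (hF : F.IsHomogeneous m) (hm : 2 ≤ m)
    (L H : MvPolynomial (Fin 3) ℂ) (hL1 : L.IsHomogeneous 1) (hL0 : L ≠ 0)
    (hLc : constantCoeff L = 0) (hFLH : F = L * H) : False := by
  rcases hirr.isUnit_or_isUnit hFLH with h | h
  · have h2 := h.map constantCoeff
    rw [hLc] at h2
    exact not_isUnit_zero h2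
  · have hH : H.IsHomogeneous (m - 1) := isHomogeneous_of_factor hF hL1 hL0 hFLH
    have h0 : constantCoeff H = 0 := by
      have hcz := hH.coeff_eq_zero (d := 0) (by rw [map_zero]; omega)
      simpa [constantCoeff_eq] using hcz
    have h2 := h.map constantCoeff
    rw [h0] at h2
    exact not_isUnit_zero h2

/-! ### Main theorem -/

/-- let `F ∈ ℂ[y1,y2,y3]` be homogeneous irreducible of degree `≥ 2`
(the curve is not a line), and let
`N(y,τ) = -F2·(τ1·y3 - y1) + F1·(τ2·y3 - y2)` (here `y3 = X 2`).  For any fixed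
`(τ1,τ2) ∈ ℂ²`, if `N(·,τ1,τ2)` is not the zero polynomial then `F` does not divide it. -/
theorem curve_does_not_divide_normal_polynomial
    (F : MvPolynomial (Fin 3) ℂ) (m : ℕ)
    (hirr : Irreducible F) (hF : F.IsHomogeneous m) (hm : 2 ≤ m)
    (τ1 τ2 : ℂ) :
    let N := -(pderiv 1 F) * (C τ1 * X 2 - X 0) + (pderiv 0 F) * (C τ2 * X 2 - X 1)
    N ≠ 0 → ¬ F ∣ N := by
  intro N hN0 hdvd
  obtain ⟨q, hq⟩ := hdvd
  have hF0 : F ≠ 0 := hirr.ne_zero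
  -- N is homogeneous of degree m
  have hlin1 : (C τ1 * X 2 - X 0 : MvPolynomial (Fin 3) ℂ).IsHomogeneous 1 :=
    ((isHomogeneous_C _ τ1).mul (isHomogeneous_X _ 2)).sub (isHomogeneous_X _ 0)
  have hlin2 : (C τ2 * X 2 - X 1 : MvPolynomial (Fin 3) ℂ).IsHomogeneous 1 :=
    ((isHomogeneous_C _ τ2).mul (isHomogeneous_X _ 2)).sub (isHomogeneous_X _ 1)
  have hNhom : N.IsHomogeneous m := by
    have hpd1 : (pderiv 1 F).IsHomogeneous (m - 1) := pderiv_isHomogeneous 1 hF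
    have hpd0 : (pderiv 0 F).IsHomogeneous (m - 1) := pderiv_isHomogeneous 0 hF
    have h : N.IsHomogeneous (m - 1 + 1) := (hpd1.neg.mul hlin1).add (hpd0.mul hlin2)
    have hmm : m - 1 + 1 = m := by omega
    rwa [hmm] at h
  -- the quotient is a nonzero constant
  have hqhom : q.IsHomogeneous 0 := by
    have := isHomogeneous_of_factor hNhom hF hF0 hq
    simpa using this
  have hqC : q = C (coeff 0 q) := eq_C_of_isHomogeneous_zero hqhom
  set c := coeff 0 q with hc
  have hc0 : c ≠ 0 := by
    intro h
    rw [hqC, h, map_zero, mul_zero] at hq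
    exact hN0 hq
  -- the transformed polynomial
  set G := aeval (φv τ1 τ2) F with hG
  have hFG : aeval (ψv τ1 τ2) G = F := psi_phi τ1 τ2 F
  have hG0 : G ≠ 0 := by
    intro h
    rw [← hFG, h, map_zero] at hF0
    exact hF0 rfl
  -- the eigen equation
  have hinj : Function.Injective (aeval (ψv τ1 τ2) : MvPolynomial (Fin 3) ℂ →ₐ[ℂ] _) := by
    intro a b hab
    rw [← phi_psi τ1 τ2 a, ← phi_psi τ1 τ2 b]
    exact congrArg _ hab
  have hmain : C I * (X 0 * pderiv 0 G - X 1 * pderiv 1 G) = C c * G := by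
    apply hinj
    show aeval (ψv τ1 τ2) _ = aeval (ψv τ1 τ2) _
    rw [← chain_rule τ1 τ2 G, hFG, map_mul, aeval_C, hFG]
    have hq2 : -(pderiv 1 F) * (C τ1 * X 2 - X 0) + (pderiv 0 F) * (C τ2 * X 2 - X 1)
        = F * C c := by rw [← hqC]; exact hq
    rw [algebraMap_eq]
    linear_combination hq2
  -- coefficientwise
  have hcoeff : ∀ e : Fin 3 →₀ ℕ, coeff e G ≠ 0 → I * ((e 0 : ℂ) - (e 1 : ℂ)) = c := by
    intro e he
    have h1 := congrArg (coeff e) hmain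
    rw [coeff_C_mul, coeff_C_mul, coeff_sub, coeff_X_mul_pderiv, coeff_X_mul_pderiv] at h1
    have h2 : (I * ((e 0 : ℂ) - (e 1 : ℂ))) * coeff e G = c * coeff e G := by
      linear_combination h1
    exact mul_right_cancel₀ he h2
  obtain ⟨e₀, he₀⟩ : ∃ d, coeff d G ≠ 0 := by
    by_contra h
    push_neg at h
    exact hG0 (by ext d; simpa using h d)
  have hkey : ∀ e : Fin 3 →₀ ℕ, coeff e G ≠ 0 → e 0 + e₀ 1 = e 1 + e₀ 0 := by
    intro e he
    have h1 := hcoeff e he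
    have h2 := hcoeff e₀ he₀
    have h3 : ((e 0 : ℂ)) - e 1 = (e₀ 0 : ℂ) - e₀ 1 := by
      have hI : (I : ℂ) ≠ 0 := I_ne_zero
      field_simp at h1 h2
      apply mul_left_cancel₀ hI
      rw [h1, h2]
    have h4 : ((e 0 + e₀ 1 : ℕ) : ℂ) = ((e 1 + e₀ 0 : ℕ) : ℂ) := by
      push_cast
      linear_combination h3
    exact Nat.cast_inj.1 h4
  have hne : e₀ 0 ≠ e₀ 1 := by
    intro h
    apply hc0
    rw [← hcoeff e₀ he₀, h]
    ring
  -- dvd by a variable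
  have hdvdvar : ∀ i : Fin 3, (∀ e : Fin 3 →₀ ℕ, coeff e G ≠ 0 → e i ≠ 0) → X i ∣ G := by
    intro i hi
    rw [G.as_sum]
    apply Finset.dvd_sum
    intro e he
    rw [mem_support_iff] at he
    exact X_dvd_monomial.2 (Or.inr (hi e he))
  rcases Nat.lt_or_ge (e₀ 1) (e₀ 0) with hlt | hge
  · -- X 0 divides G
    obtain ⟨H, hH⟩ := hdvdvar 0 (fun e he h0 => by have := hkey e he; omega)
    have hzP1 : (zP τ1 τ2).IsHomogeneous 1 := by
      apply MvPolynomial.IsHomogeneous.add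
      · exact (isHomogeneous_X _ 0).sub ((isHomogeneous_C _ τ1).mul (isHomogeneous_X _ 2))
      · exact (isHomogeneous_C _ I).mul
          ((isHomogeneous_X _ 1).sub ((isHomogeneous_C _ τ2).mul (isHomogeneous_X _ 2)))
    have hzP0 : zP τ1 τ2 ≠ 0 := by
      intro h
      have := phi_psi τ1 τ2 (X 0)
      rw [show aeval (ψv τ1 τ2) (X 0 : MvPolynomial (Fin 3) ℂ) = zP τ1 τ2 by simp [ψv], h,
        map_zero] at this
      exact X_ne_zero 0 this.symm
    have hzPc : constantCoeff (zP τ1 τ2) = 0 := by simp [zP]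
    refine not_unit_pair hirr hF hm (zP τ1 τ2) (aeval (ψv τ1 τ2) H) hzP1 hzP0 hzPc ?_
    rw [← hFG, hH, map_mul]
    congr 1
    simp [ψv]
  · -- X 1 divides G
    have hlt : e₀ 0 < e₀ 1 := by omega
    obtain ⟨H, hH⟩ := hdvdvar 1 (fun e he h0 => by have := hkey e he; omega)
    have hzP1 : (zbP τ1 τ2).IsHomogeneous 1 := by
      apply MvPolynomial.IsHomogeneous.sub
      · exact (isHomogeneous_X _ 0).sub ((isHomogeneous_C _ τ1).mul (isHomogeneous_X _ 2))
      · exact (isHomogeneous_C _ I).mul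
          ((isHomogeneous_X _ 1).sub ((isHomogeneous_C _ τ2).mul (isHomogeneous_X _ 2)))
    have hzP0 : zbP τ1 τ2 ≠ 0 := by
      intro h
      have := phi_psi τ1 τ2 (X 1)
      rw [show aeval (ψv τ1 τ2) (X 1 : MvPolynomial (Fin 3) ℂ) = zbP τ1 τ2 by simp [ψv], h,
        map_zero] at this
      exact X_ne_zero 1 this.symm
    have hzPc : constantCoeff (zbP τ1 τ2) = 0 := by simp [zbP]
    refine not_unit_pair hirr hF hm (zbP τ1 τ2) (aeval (ψv τ1 τ2) H) hzP1 hzP0 hzPc ?_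
    rw [← hFG, hH, map_mul]
    congr 1
    simp [ψv]
end
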